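/- There is no v ∈ Z[ω] such that τ·|v|² = 1, where τ = (√5-1)/2. -/
import Mathlib


noncomputable def tau : ℝ := (Real.sqrt 5 - 1) / 2
noncomputable def om : ℂ := Complex.exp (Real.pi * Complex.I / 5)

def Zomega : Set ℂ := {z | ∃ a b c d : ℤ, z = a + b * om + c * om ^ 2 + d * om ^ 3}

open Real in
theorem stmt8 : ¬ ∃ v ∈ Zomega, tau * Complex.normSq v = 1 := by
  rintro ⟨v, ⟨a, b, c, d, hv⟩, h⟩
  have hs : Real.sqrt 5 ^ 2 = 5 := Real.sq_sqrt (by norm_num)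
  have hirr : Irrational (Real.sqrt 5) := by
    simpa using (by norm_num : Nat.Prime 5).irrational_sqrt
  -- powers of om
  have hom : ∀ k : ℕ, om ^ k = Complex.exp ((k * π / 5 : ℝ) * Complex.I) := by
    intro k
    rw [om, ← Complex.exp_nat_mul]
    congr 1
    push_cast
    ring
  have e1r : om.re = Real.cos (π / 5) := by
    have := hom 1
    rw [pow_one] at this
    rw [this, Complex.exp_ofReal_mul_I_re]
    norm_num
  have e1i : om.im = Real.sin (π / 5) := by
    have := hom 1
    rw [pow_one] at this
    rw [this, Complex.exp_ofReal_mul_I_im]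
    norm_num
  have e2r : (om ^ 2).re = Real.cos (2 * π / 5) := by
    rw [hom 2, Complex.exp_ofReal_mul_I_re]; norm_num
  have e2i : (om ^ 2).im = Real.sin (2 * π / 5) := by
    rw [hom 2, Complex.exp_ofReal_mul_I_im]; norm_num
  have e3r : (om ^ 3).re = Real.cos (3 * π / 5) := by
    rw [hom 3, Complex.exp_ofReal_mul_I_re]; norm_num
  have e3i : (om ^ 3).im = Real.sin (3 * π / 5) := by
    rw [hom 3, Complex.exp_ofReal_mul_I_im]; norm_num
  -- trig values
  have hC1 : Real.cos (π / 5) = (1 + Real.sqrt 5) / 4 := Real.cos_pi_div_five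
  have hC2 : Real.cos (2 * π / 5) = (Real.sqrt 5 - 1) / 4 := by
    have h2 := Real.cos_two_mul (π / 5)
    rw [show 2 * (π / 5) = 2 * π / 5 by ring] at h2
    rw [h2, hC1]
    linear_combination hs / 8
  have hC3 : Real.cos (3 * π / 5) = -((Real.sqrt 5 - 1) / 4) := by
    rw [show 3 * π / 5 = π - 2 * π / 5 by ring, Real.cos_pi_sub, hC2]
  -- sine products
  have hS11 : Real.sin (π / 5) * Real.sin (π / 5)
      = Real.cos (π / 5) * Real.cos (π / 5) - Real.cos (2 * π / 5) := by
    have := Real.cos_add (π / 5) (π / 5)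
    rw [show π / 5 + π / 5 = 2 * π / 5 by ring] at this
    linarith
  have hS12 : Real.sin (π / 5) * Real.sin (2 * π / 5)
      = Real.cos (π / 5) * Real.cos (2 * π / 5) - Real.cos (3 * π / 5) := by
    have := Real.cos_add (π / 5) (2 * π / 5)
    rw [show π / 5 + 2 * π / 5 = 3 * π / 5 by ring] at this
    linarith
  have hS13 : Real.sin (π / 5) * Real.sin (3 * π / 5)
      = Real.cos (π / 5) * Real.cos (3 * π / 5) + Real.cos (π / 5) := by
    have h4 := Real.cos_add (π / 5) (3 * π / 5)
    rw [show π / 5 + 3 * π / 5 = π - π / 5 by ring, Real.cos_pi_sub] at h4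
    linarith
  have hS22 : Real.sin (2 * π / 5) * Real.sin (2 * π / 5)
      = Real.cos (2 * π / 5) * Real.cos (2 * π / 5) + Real.cos (π / 5) := by
    have h4 := Real.cos_add (2 * π / 5) (2 * π / 5)
    rw [show 2 * π / 5 + 2 * π / 5 = π - π / 5 by ring, Real.cos_pi_sub] at h4
    linarith
  have hS23 : Real.sin (2 * π / 5) * Real.sin (3 * π / 5)
      = Real.cos (2 * π / 5) * Real.cos (3 * π / 5) + 1 := by
    have h4 := Real.cos_add (2 * π / 5) (3 * π / 5)
    rw [show 2 * π / 5 + 3 * π / 5 = π by ring, Real.cos_pi] at h4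
    linarith
  have hS33 : Real.sin (3 * π / 5) * Real.sin (3 * π / 5)
      = Real.cos (3 * π / 5) * Real.cos (3 * π / 5) + Real.cos (π / 5) := by
    have h4 := Real.cos_add (3 * π / 5) (3 * π / 5)
    rw [show 3 * π / 5 + 3 * π / 5 = π + π / 5 by ring] at h4
    rw [Real.cos_add, Real.cos_pi, Real.sin_pi] at h4
    linarith
  -- real and imaginary parts of v
  have hre : v.re = a + b * Real.cos (π / 5) + c * Real.cos (2 * π / 5)
      + d * Real.cos (3 * π / 5) := by
    rw [hv]
    simp [Complex.add_re, Complex.mul_re, e1r, e1i, e2r, e2i, e3r, e3i]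
  have him : v.im = b * Real.sin (π / 5) + c * Real.sin (2 * π / 5)
      + d * Real.sin (3 * π / 5) := by
    rw [hv]
    simp [Complex.add_im, Complex.mul_im, e1r, e1i, e2r, e2i, e3r, e3i]
  rw [Complex.normSq_apply, hre, him] at h
  have htau : tau = (Real.sqrt 5 - 1) / 2 := rfl
  rw [htau] at h
  -- the key equation: Q * √5 + P = 0 with integers Q, P
  simp only [hC1, hC2, hC3] at h hS11 hS12 hS13 hS22 hS23 hS33
  set Q : ℤ := 2 * (a ^ 2 + b ^ 2 + c ^ 2 + d ^ 2) - 2 * (a * c + b * d) + 2 * (a * d) with hQdef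
  set P : ℤ := 4 * (a * b + b * c + c * d) + 6 * (a * c + b * d) - 6 * (a * d)
      - 2 * (a ^ 2 + b ^ 2 + c ^ 2 + d ^ 2) - 4 with hPdef
  have key : (Q : ℝ) * Real.sqrt 5 + (P : ℝ) = 0 := by
    rw [hQdef, hPdef]
    push_cast
    linear_combination 4 * h
      - 2 * ((b : ℝ) ^ 2) * (Real.sqrt 5 - 1) * hS11
      - 4 * ((b : ℝ) * c) * (Real.sqrt 5 - 1) * hS12
      - 4 * ((b : ℝ) * d) * (Real.sqrt 5 - 1) * hS13
      - 2 * ((c : ℝ) ^ 2) * (Real.sqrt 5 - 1) * hS22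
      - 4 * ((c : ℝ) * d) * (Real.sqrt 5 - 1) * hS23
      - 2 * ((d : ℝ) ^ 2) * (Real.sqrt 5 - 1) * hS33
      + ((1 - Real.sqrt 5) * ((b : ℝ) + c - d) ^ 2 / 4
        - ((a : ℝ) * b + b * c + c * d + a * c + b * d - a * d)) * hs
  have hQ0 : (Q : ℝ) = 0 := by
    by_contra hQ
    apply hirr
    refine ⟨(-P : ℚ) / (Q : ℚ), ?_⟩
    push_cast
    field_simp
    linear_combination -key
  have hP0 : (P : ℝ) = 0 := by
    rw [hQ0] at key
    linarith
  have hQZ : Q = 0 := by exact_mod_cast hQ0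
  have hPZ : P = 0 := by exact_mod_cast hP0
  have hsq : (a - c) ^ 2 + (b - d) ^ 2 + (a + d) ^ 2 + b ^ 2 + c ^ 2 = 0 := by
    rw [hQdef] at hQZ
    linear_combination hQZ
  have hb : b = 0 := by
    have h2 : b ^ 2 = 0 := by
      linarith [hsq, sq_nonneg (a - c), sq_nonneg (b - d), sq_nonneg (a + d), sq_nonneg b, sq_nonneg c]
    exact pow_eq_zero_iff two_ne_zero |>.mp h2
  have hc : c = 0 := by
    have h2 : c ^ 2 = 0 := by
      linarith [hsq, sq_nonneg (a - c), sq_nonneg (b - d), sq_nonneg (a + d), sq_nonneg b, sq_nonneg c]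
    exact pow_eq_zero_iff two_ne_zero |>.mp h2
  have ha : a = c := by
    have h2 : (a - c) ^ 2 = 0 := by
      linarith [hsq, sq_nonneg (a - c), sq_nonneg (b - d), sq_nonneg (a + d), sq_nonneg b, sq_nonneg c]
    have := pow_eq_zero_iff two_ne_zero |>.mp h2
    omega
  have hd : d = b := by
    have h2 : (b - d) ^ 2 = 0 := by
      linarith [hsq, sq_nonneg (a - c), sq_nonneg (b - d), sq_nonneg (a + d), sq_nonneg b, sq_nonneg c]
    have := pow_eq_zero_iff two_ne_zero |>.mp h2
    omega
  rw [hb] at hd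
  rw [hPdef, hb, hc, hd] at hPZ
  nlinarith [sq_nonneg a, hPZ]
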